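/- arXiv:1911.07594 — 2 statements merged into one kernel-verified Lean document; each statement's English description precedes it below -/
import Mathlib

section
/- Fix constants μ > 0, c > 0 and α ∈ (0,1), and define g : [0,∞) → ℝ by g(x) = μ·(1 − exp(−c·x^α)) − x. Then g has a unique root ρ* in (0,∞); moreover ρ* < μ, g(x) > 0 for all x ∈ (0, ρ*), and g(x) < 0 for all x > ρ* (so ρ* is a stable zero of g). -/
open Real

/-!
Rewriting `g(x) = 0` as `μ (1 - exp (-c x^α)) = x`: the left side is strictly concave on `[0, ∞)`
(a concave increasing function of the strictly concave `x^α`) and vanishes at `0`, so `g` is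
strictly concave with `g 0 = 0` and its secant slope `g x / x` is strictly decreasing on `(0, ∞)`.
That slope is positive for small `x` (where `μ (1 - exp (-c x^α)) ≈ μ c x^α ≫ x`) and negative at
`x = μ`, so it has exactly one zero `ρ`, and the sign of `g = x · (g x / x)` changes there.
-/

open Set Filter Topology

theorem StrictConcaveOn.strictAntiOn_div_of_map_zero {𝕜 : Type*} [Field 𝕜] [LinearOrder 𝕜]
    [IsStrictOrderedRing 𝕜] {f : 𝕜 → 𝕜} (hf : StrictConcaveOn 𝕜 (Ici 0) f) (h0 : f 0 = 0) :
    StrictAntiOn (fun x ↦ f x / x) (Ioi 0) := fun x hx y hy hxy ↦ by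
  simpa [h0] using hf.secant_strict_mono self_mem_Ici (le_of_lt hx) (le_of_lt hy)
    (ne_of_gt hx) (ne_of_gt hy) hxy

theorem StrictConcaveOn.exists_root_sign_change {f : ℝ → ℝ} (hf : StrictConcaveOn ℝ (Ici 0) f)
    (h0 : f 0 = 0) {a b : ℝ} (hcont : ContinuousOn f (Icc a b)) (ha : 0 < a) (hab : a ≤ b)
    (hfa : 0 < f a) (hfb : f b < 0) :
    ∃ ρ ∈ Ioo a b, f ρ = 0 ∧ (∀ x, 0 < x → x < ρ → 0 < f x) ∧ ∀ x, ρ < x → f x < 0 := by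
  obtain ⟨ρ, hρab, hρ⟩ := intermediate_value_Ioo' hab hcont ⟨hfb, hfa⟩
  have hρ0 : 0 < ρ := ha.trans hρab.1
  have hslope := hf.strictAntiOn_div_of_map_zero h0
  refine ⟨ρ, hρab, hρ, fun x hx hxρ ↦ ?_, fun x hρx ↦ ?_⟩
  · have : f ρ / ρ < f x / x := hslope hx hρ0 hxρ
    rw [hρ, zero_div] at this
    simpa using (lt_div_iff₀ hx).1 this
  · have hx : 0 < x := hρ0.trans hρx
    have : f x / x < f ρ / ρ := hslope hρ0 hx hρx
    rw [hρ, zero_div] at this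
    simpa using (div_lt_iff₀ hx).1 this

theorem half_le_one_sub_exp_neg {s : ℝ} (hs₀ : 0 ≤ s) (hs₁ : s ≤ 1) : s / 2 ≤ 1 - exp (-s) := by
  have : exp (-s) ≤ (1 + s)⁻¹ := by
    rw [exp_neg]; exact inv_anti₀ (by linarith) (by linarith [add_one_le_exp s])
  have : s / 2 ≤ 1 - (1 + s)⁻¹ := by
    rw [show 1 - (1 + s)⁻¹ = s / (1 + s) by field_simp; ring]
    exact div_le_div_of_nonneg_left hs₀ (by linarith) (by linarith)
  linarith

theorem tendsto_rpow_nhdsGT_zero {p : ℝ} (hp : 0 < p) :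
    Tendsto (fun x : ℝ ↦ x ^ p) (𝓝[>] 0) (𝓝 0) := by
  simpa [zero_rpow hp.ne'] using
    ((continuous_rpow_const hp.le).tendsto 0).mono_left nhdsWithin_le_nhds

theorem exists_pos_lt_mul_one_sub_exp_neg_rpow {μ c α : ℝ} (hμ : 0 < μ) (hc : 0 < c)
    (hα₀ : 0 < α) (hα₁ : α < 1) : ∃ a, 0 < a ∧ a < μ ∧ a < μ * (1 - exp (-c * a ^ α)) := by
  have hnear : ∀ᶠ x in 𝓝[>] (0 : ℝ), 0 < x ∧ x < μ ∧ c * x ^ α < 1 ∧ x ^ (1 - α) < μ * c / 2 :=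
    eventually_mem_nhdsWithin.and <| ((gt_mem_nhds hμ).filter_mono nhdsWithin_le_nhds).and <|
      (((tendsto_rpow_nhdsGT_zero hα₀).const_mul c).eventually (gt_mem_nhds (by simp))).and <|
      (tendsto_rpow_nhdsGT_zero (sub_pos.2 hα₁)).eventually (gt_mem_nhds (by positivity))
  obtain ⟨a, ha, haμ, hs, hsmall⟩ := hnear.exists
  refine ⟨a, ha, haμ, ?_⟩
  have hpow : 0 < a ^ α := rpow_pos_of_pos ha α
  calc a = a ^ (1 - α) * a ^ α := by rw [← rpow_add ha]; norm_num
    _ < μ * c / 2 * a ^ α := by gcongr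
    _ = μ * ((c * a ^ α) / 2) := by ring
    _ ≤ μ * (1 - exp (-c * a ^ α)) := by
      rw [neg_mul]; gcongr; exact half_le_one_sub_exp_neg (by positivity) hs.le

theorem strictConcaveOn_one_sub_exp_neg_rpow_sub_id {μ c α : ℝ} (hμ : 0 < μ) (hc : 0 < c)
    (hα₀ : 0 < α) (hα₁ : α < 1) :
    StrictConcaveOn ℝ (Ici 0) fun x ↦ μ * (1 - exp (-c * x ^ α)) - x := by
  have hφ : ConcaveOn ℝ univ fun t : ℝ ↦ μ * (1 - exp (-c * t)) := by
    have := ((convexOn_exp.comp_linearMap ((-c) • LinearMap.id)).neg.add_const 1).smul hμ.le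
    simpa [sub_eq_neg_add, Function.comp_def] using this
  have hmono : StrictMono fun t : ℝ ↦ μ * (1 - exp (-c * t)) := fun t u htu ↦ by
    simp only [neg_mul]; gcongr
  have himage : Convex ℝ ((fun x : ℝ ↦ x ^ α) '' Ici 0) :=
    (isPreconnected_Ici.image _ (continuous_rpow_const hα₀.le).continuousOn).convex
  exact ((hφ.subset (subset_univ _) himage).comp_strictConcaveOn (strictConcaveOn_rpow hα₀ hα₁)
    (hmono.strictMonoOn _)).sub_convexOn (convexOn_id (convex_Ici 0))

/-- The function `g(x) = μ(1 - exp(-c x^α)) - x` (with `μ, c > 0`, `α ∈ (0,1)`) has a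
unique root `ρ*` in `(0,∞)`; moreover `ρ* < μ`, `g > 0` on `(0, ρ*)` and `g < 0` on
`(ρ*, ∞)`, so `ρ*` is a stable zero of `g`. -/
theorem unique_stable_root
    (μ c α : ℝ) (hμ : 0 < μ) (hc : 0 < c) (hα : α ∈ Set.Ioo (0:ℝ) 1)
    (g : ℝ → ℝ) (hg : ∀ x : ℝ, g x = μ * (1 - Real.exp (-c * x ^ α)) - x) :
    ∃ ρ : ℝ, 0 < ρ ∧ g ρ = 0 ∧ ρ < μ ∧
      (∀ x : ℝ, 0 < x → x < ρ → 0 < g x) ∧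
      (∀ x : ℝ, ρ < x → g x < 0) ∧
      (∀ x : ℝ, 0 < x → g x = 0 → x = ρ) := by
  obtain ⟨hα₀, hα₁⟩ := hα
  obtain rfl : g = fun x ↦ μ * (1 - exp (-c * x ^ α)) - x := funext hg
  obtain ⟨a, ha, haμ, hga⟩ := exists_pos_lt_mul_one_sub_exp_neg_rpow hμ hc hα₀ hα₁
  have hcont : Continuous fun x : ℝ ↦ μ * (1 - exp (-c * x ^ α)) - x := by
    have := continuous_rpow_const hα₀.le
    fun_prop
  have hgμ : μ * (1 - exp (-c * μ ^ α)) - μ < 0 := by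
    nlinarith [exp_pos (-c * μ ^ α)]
  obtain ⟨ρ, ⟨haρ, hρμ⟩, hρ, hpos, hneg⟩ :=
    (strictConcaveOn_one_sub_exp_neg_rpow_sub_id hμ hc hα₀ hα₁).exists_root_sign_change
      (by simp [zero_rpow hα₀.ne']) hcont.continuousOn ha haμ.le (sub_pos.2 hga) hgμ
  refine ⟨ρ, ha.trans haρ, hρ, hρμ, hpos, hneg, fun x hx hgx ↦ ?_⟩
  by_contra hxρ
  rcases lt_or_gt_of_ne hxρ with hlt | hgt
  · exact (hpos x hx hlt).ne' hgx
  · exact (hneg x hgt).ne hgx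
end

section
/- Fix α ∈ (0,1), γ ∈ (0,1) with α + γ < 1, c > 0, and an integer n_0 ≥ 1. Let (a_n)_{n≥n_0} be the real sequence defined by a_{n_0} = a_0 > 0 and a_{n+1} = a_n + c·a_n^α·n^{γ−1} for n ≥ n_0. Then a_n / n^{γ/(1−α)} → (c·(1−α)/γ)^{1/(1−α)} as n → ∞. -/
/-!
Put `b_n = a_n^(1-α)` and write `a_{n+1} = a_n (1 + x_n)` with `x_n = c a_n^(α-1) n^(γ-1)`.
Since `a_n ≥ a₀` and `γ < 1`, `x_n → 0`, so
`b_{n+1} - b_n = c n^(γ-1) ((1 + x_n)^(1-α) - 1) / x_n ∼ c (1-α) n^(γ-1)`,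
while `(n+1)^γ - n^γ ∼ γ n^(γ-1)`; both are the derivative of `t ↦ (1+t)^p` at `0`.
Stolz–Cesàro gives `b_n / n^γ → c (1-α) / γ`, and raising to the power `1/(1-α)` concludes.
-/

open Filter Topology Finset Asymptotics

lemma tendsto_one_add_rpow_sub_one_div (p : ℝ) :
    Tendsto (fun t : ℝ => ((1 + t) ^ p - 1) / t) (𝓝[>] 0) (𝓝 p) := by
  have h : HasDerivAt (fun t : ℝ => (1 + t) ^ p) p 0 := by
    simpa using ((hasDerivAt_id (0 : ℝ)).const_add 1).rpow_const (p := p) (Or.inl (by norm_num))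
  simpa [div_eq_inv_mul] using h.tendsto_slope_zero_right

lemma tendsto_natCast_add_one_rpow_sub_rpow_div (γ : ℝ) :
    Tendsto (fun n : ℕ => (((n : ℝ) + 1) ^ γ - (n : ℝ) ^ γ) / (n : ℝ) ^ (γ - 1)) atTop (𝓝 γ) := by
  refine ((tendsto_one_add_rpow_sub_one_div γ).comp
    (tendsto_inv_atTop_nhdsGT_zero.comp tendsto_natCast_atTop_atTop)).congr' ?_
  filter_upwards [eventually_gt_atTop 0] with n hn
  have hn' : (0 : ℝ) < n := by exact_mod_cast hn
  have hsplit : (n : ℝ) + 1 = n * (1 + (n : ℝ)⁻¹) := by field_simp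
  simp only [Function.comp_apply]
  rw [hsplit, Real.mul_rpow hn'.le (by positivity), Real.rpow_sub_one hn'.ne']
  field_simp

lemma strictMono_natCast_rpow {γ : ℝ} (hγ : 0 < γ) : StrictMono fun n : ℕ => (n : ℝ) ^ γ :=
  fun _ _ h => Real.rpow_lt_rpow (Nat.cast_nonneg _) (Nat.cast_lt.2 h) hγ

lemma tendsto_natCast_rpow_atTop {γ : ℝ} (hγ : 0 < γ) :
    Tendsto (fun n : ℕ => (n : ℝ) ^ γ) atTop atTop :=
  (tendsto_rpow_atTop hγ).comp tendsto_natCast_atTop_atTop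

/- With `x = c A^(α-1) t`, the new value is `A (1 + x)` and `A^(1-α) x = c t`. -/
lemma add_mul_rpow_rpow_one_sub_sub_rpow {A c t α : ℝ} (hA : 0 < A)
    (hx : 0 < c * A ^ (α - 1) * t) :
    (A + c * A ^ α * t) ^ (1 - α) - A ^ (1 - α) =
      c * t * (((1 + c * A ^ (α - 1) * t) ^ (1 - α) - 1) / (c * A ^ (α - 1) * t)) := by
  set x := c * A ^ (α - 1) * t with hx_def
  have hstep : A + c * A ^ α * t = A * (1 + x) := by
    rw [hx_def, show α = 1 + (α - 1) by ring, Real.rpow_add hA, Real.rpow_one]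
    ring_nf
  have hscale : A ^ (1 - α) * x = c * t := by
    have hA_inv : A ^ (1 - α) * A ^ (α - 1) = 1 := by
      rw [← Real.rpow_add hA, sub_add_sub_cancel', sub_self, Real.rpow_zero]
    linear_combination c * t * hA_inv
  rw [hstep, Real.mul_rpow hA.le (by linarith), ← hscale]
  field_simp

/-- The Stolz–Cesàro theorem. -/
theorem tendsto_div_of_tendsto_sub_div_sub {u v : ℕ → ℝ} {ℓ : ℝ} (hv : StrictMono v)
    (hv_top : Tendsto v atTop atTop)
    (h : Tendsto (fun n => (u (n + 1) - u n) / (v (n + 1) - v n)) atTop (𝓝 ℓ)) :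
    Tendsto (fun n => u n / v n) atTop (𝓝 ℓ) := by
  have hΔv : ∀ n, 0 < v (n + 1) - v n := fun n => sub_pos.2 (hv n.lt_succ_self)
  have hconst : ∀ C : ℝ, (fun _ => C) =o[atTop] v := fun C =>
    isLittleO_const_left.2 (Or.inr (tendsto_norm_atTop_atTop.comp hv_top))
  have hstep : (fun n => (u (n + 1) - u n) - ℓ * (v (n + 1) - v n))
      =o[atTop] fun n => v (n + 1) - v n := by
    refine (((isLittleO_one_iff ℝ).2 (tendsto_sub_nhds_zero_iff.2 h)).mul_isBigO
      (isBigO_refl (fun n => v (n + 1) - v n) atTop)).congr (fun n => ?_) (fun n => one_mul _)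
    field_simp [(hΔv n).ne']
  have htelescope : ∀ n, ∑ i ∈ range n, ((u (i + 1) - u i) - ℓ * (v (i + 1) - v i))
      = (u n - u 0) - ℓ * (v n - v 0) := fun n => by
    rw [sum_sub_distrib, ← mul_sum, sum_range_sub, sum_range_sub]
  have hsum := hstep.sum_range (fun n => (hΔv n).le) (by
    simpa only [sum_range_sub, ← sub_eq_add_neg] using
      tendsto_atTop_add_const_right _ (-v 0) hv_top)
  simp only [htelescope, sum_range_sub] at hsum
  have hmain : (fun n => u n - ℓ * v n) =o[atTop] v :=
    ((hsum.trans_isBigO ((isBigO_refl v atTop).sub (hconst (v 0)).isBigO)).add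
      (hconst (u 0 - ℓ * v 0))).congr_left (fun n => by ring)
  refine (hmain.tendsto_div_nhds_zero.add_const ℓ).congr' ?_ |>.trans (by simp)
  filter_upwards [hv_top.eventually_gt_atTop 0] with n hn
  field_simp
  ring

lemma rpow_div_rpow_rpow_one_div {A N β γ : ℝ} (hA : 0 ≤ A) (hN : 0 ≤ N) (hβ : β ≠ 0) :
    (A ^ β / N ^ γ) ^ (1 / β) = A / N ^ (γ / β) := by
  rw [Real.div_rpow (Real.rpow_nonneg hA β) (Real.rpow_nonneg hN γ), ← Real.rpow_mul hA,
    ← Real.rpow_mul hN, mul_one_div_cancel hβ, Real.rpow_one, mul_one_div]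

section Recursion

variable {α γ c a₀ : ℝ} {n₀ : ℕ} {a : ℕ → ℝ}

lemma init_le_of_recursion (hc : 0 ≤ c) (ha₀ : 0 < a₀) (hinit : a n₀ = a₀)
    (hrec : ∀ n ≥ n₀, a (n + 1) = a n + c * a n ^ α * (n : ℝ) ^ (γ - 1)) :
    ∀ n ≥ n₀, a₀ ≤ a n := by
  intro n hn
  induction n, hn using Nat.le_induction with
  | base => exact hinit.ge
  | succ n hn ih =>
    have : 0 ≤ c * a n ^ α * (n : ℝ) ^ (γ - 1) := by
      have := ha₀.trans_le ih
      positivity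
    linarith [hrec n hn]

/- `c a_n^(α-1) n^(γ-1) = a_{n+1} / a_n - 1` is the relative increment of the recursion. -/
lemma tendsto_relative_increment (hα : α ≤ 1) (hγ : γ < 1) (hc : 0 < c) (ha₀ : 0 < a₀)
    (ha : ∀ᶠ n in atTop, a₀ ≤ a n) :
    Tendsto (fun n : ℕ => c * a n ^ (α - 1) * (n : ℝ) ^ (γ - 1)) atTop (𝓝[>] 0) := by
  have hpow : Tendsto (fun n : ℕ => (n : ℝ) ^ (γ - 1)) atTop (𝓝 0) := by
    simpa [neg_sub, Function.comp_def] using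
      (tendsto_rpow_neg_atTop (sub_pos.2 hγ)).comp tendsto_natCast_atTop_atTop
  have hbound := hpow.const_mul (c * a₀ ^ (α - 1))
  rw [mul_zero] at hbound
  refine tendsto_nhdsWithin_iff.2 ⟨squeeze_zero' ?_ ?_ hbound, ?_⟩
  · filter_upwards [ha] with n hn
    have := ha₀.trans_le hn
    positivity
  · filter_upwards [ha] with n hn
    have := Real.rpow_le_rpow_of_nonpos ha₀ hn (sub_nonpos.2 hα)
    gcongr
  · filter_upwards [ha, eventually_gt_atTop 0] with n hn hn_pos
    have := ha₀.trans_le hn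
    rw [Set.mem_Ioi]
    positivity

end Recursion

theorem deterministic_recursion_asymptotics_general
    (α γ c : ℝ) (hα : α ∈ Set.Ioo (0:ℝ) 1) (hγ : γ ∈ Set.Ioo (0:ℝ) 1)
    (hc : 0 < c)
    (n₀ : ℕ) (a₀ : ℝ) (ha₀ : 0 < a₀)
    (a : ℕ → ℝ) (hinit : a n₀ = a₀)
    (hrec : ∀ n ≥ n₀, a (n + 1) = a n + c * (a n) ^ α * (n : ℝ) ^ (γ - 1)) :
    Tendsto (fun n => a n / (n : ℝ) ^ (γ / (1 - α))) atTop
      (nhds ((c * (1 - α) / γ) ^ (1 / (1 - α)))) := by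
  have hβ : 0 < 1 - α := sub_pos.2 hα.2
  have hγ₀ : 0 < γ := hγ.1
  have ha : ∀ᶠ n in atTop, a₀ ≤ a n :=
    eventually_atTop.2 ⟨n₀, init_le_of_recursion hc.le ha₀ hinit hrec⟩
  have hincr : Tendsto (fun n : ℕ => (a (n + 1) ^ (1 - α) - a n ^ (1 - α)) /
      (((n + 1 : ℕ) : ℝ) ^ γ - (n : ℝ) ^ γ)) atTop (𝓝 (c * (1 - α) / γ)) := by
    have hslope := (tendsto_one_add_rpow_sub_one_div (1 - α)).comp
      (tendsto_relative_increment hα.2.le hγ.2 hc ha₀ ha)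
    refine ((hslope.const_mul c).div (tendsto_natCast_add_one_rpow_sub_rpow_div γ)
      hγ₀.ne').congr' ?_
    filter_upwards [ha, eventually_ge_atTop n₀, eventually_gt_atTop 0] with n hn hn₀ hn_pos
    have hA : 0 < a n := ha₀.trans_le hn
    rw [hrec n hn₀, add_mul_rpow_rpow_one_sub_sub_rpow hA (by positivity)]
    simp only [Pi.div_apply, Function.comp_apply]
    push_cast
    rw [div_div_eq_mul_div]
    ring
  have hb := tendsto_div_of_tendsto_sub_div_sub (u := fun n => a n ^ (1 - α))
    (strictMono_natCast_rpow hγ₀) (tendsto_natCast_rpow_atTop hγ₀) hincr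
  refine (hb.rpow_const (Or.inr (by positivity))).congr' ?_
  filter_upwards [ha] with n hn
  exact rpow_div_rpow_rpow_one_div (ha₀.trans_le hn).le n.cast_nonneg hβ.ne'

/-- The deterministic recursion `a_{n+1} = a_n + c a_n^α n^{γ-1}` (with `α, γ ∈ (0,1)`,
`α + γ < 1`, `c > 0`, started at `a_{n₀} = a₀ > 0`) satisfies
`a_n / n^{γ/(1-α)} → (c(1-α)/γ)^{1/(1-α)}`. -/
theorem deterministic_recursion_asymptotics
    (α γ c : ℝ) (hα : α ∈ Set.Ioo (0:ℝ) 1) (hγ : γ ∈ Set.Ioo (0:ℝ) 1)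
    (hαγ : α + γ < 1) (hc : 0 < c)
    (n₀ : ℕ) (hn₀ : 1 ≤ n₀) (a₀ : ℝ) (ha₀ : 0 < a₀)
    (a : ℕ → ℝ) (hinit : a n₀ = a₀)
    (hrec : ∀ n ≥ n₀, a (n + 1) = a n + c * (a n) ^ α * (n : ℝ) ^ (γ - 1)) :
    Tendsto (fun n => a n / (n : ℝ) ^ (γ / (1 - α))) atTop
      (nhds ((c * (1 - α) / γ) ^ (1 / (1 - α)))) :=
  deterministic_recursion_asymptotics_general α γ c hα hγ hc n₀ a₀ ha₀ a hinit hrec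
end
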